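/- arXiv:2210.15249 — 6 statements merged into one kernel-verified Lean document; each statement's English description precedes it below -/
import Mathlib

section
/- Let X be a connected non-bipartite graph and α an automorphism of BX. Then α is an expected automorphism of BX if and only if for every vertex x of X there exists a vertex y of X with α({(x,0),(x,1)}) = {(y,0),(y,1)}. -/
open SimpleGraph

/-- The canonical double cover `BX = X × K₂` of a graph `X`:
vertex set `V × Bool`, with `(x,i)` adjacent to `(y,j)` iff `x ~ y` in `X` and `i ≠ j`. -/
def doubleCover {V : Type*} (X : SimpleGraph V) : SimpleGraph (V × Bool) where
  Adj p q := X.Adj p.1 q.1 ∧ p.2 ≠ q.2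
  symm := ⟨fun p q h => ⟨X.adj_symm h.1, Ne.symm h.2⟩⟩
  loopless := ⟨fun p h => h.2 rfl⟩

/-- An automorphism of `BX` is *expected* if it lies in the subgroup generated by the
lifts of automorphisms of `X` and the coordinate swap `τ`, i.e. it has the form
`(x,i) ↦ (φ x, i + b)` for some automorphism `φ` of `X` and some `b`. -/
def IsExpected {V : Type*} (X : SimpleGraph V) (α : doubleCover X ≃g doubleCover X) : Prop :=
  ∃ (φ : X ≃g X) (b : Bool), ∀ p : V × Bool, α p = (φ p.1, xor p.2 b)

/-- A graph is *stable* if every automorphism of its canonical double cover is expected. -/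
def IsStable {V : Type*} (X : SimpleGraph V) : Prop :=
  ∀ α : doubleCover X ≃g doubleCover X, IsExpected X α

/-- A graph is *twin-free* if distinct vertices have distinct neighbourhoods. -/
def TwinFree {V : Type*} (X : SimpleGraph V) : Prop :=
  ∀ u v : V, X.neighborSet u = X.neighborSet v → u = v

/-! An automorphism `α` of `BX` maps fibres onto fibres exactly when it commutes with the swap
`τ`, i.e. `α (x, true) = τ (α (x, false))`. For `x ~ x'` the edge `(x,false) ~ (x',true)` then
forces `α (x, false)` and `α (x', false)` into the same layer, so by connectedness `α` maps the
layer `V × {false}` onto a single layer `V × {b}`. Projecting gives a permutation `φ` of `V` with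
`α (x, i) = (φ x, i xor b)`, and adjacency in `BX` between the two layers is adjacency in `X`. -/

section

variable {V : Type*} {X : SimpleGraph V}

@[simp] lemma doubleCover_adj {p q : V × Bool} :
    (doubleCover X).Adj p q ↔ X.Adj p.1 q.1 ∧ p.2 ≠ q.2 :=
  Iff.rfl

lemma SimpleGraph.Reachable.apply_eq_of_forall_adj {β : Type*} {f : V → β}
    (hf : ∀ u v, X.Adj u v → f u = f v) {u v : V} (h : X.Reachable u v) : f u = f v := by
  rw [reachable_iff_reflTransGen] at h
  induction h with
  | refl => rfl
  | tail _ hadj ih => exact ih.trans (hf _ _ hadj)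

lemma exists_pair_eq_fibre_iff (p q : V × Bool) :
    (∃ y : V, ({p, q} : Set (V × Bool)) = {(y, false), (y, true)}) ↔ q = (p.1, !p.2) := by
  obtain ⟨x, i⟩ := p
  obtain ⟨x', j⟩ := q
  simp only [Set.pair_eq_pair_iff, Prod.mk.injEq]
  constructor
  · rintro ⟨y, ⟨⟨rfl, rfl⟩, rfl, rfl⟩ | ⟨⟨rfl, rfl⟩, rfl, rfl⟩⟩ <;> simp
  · rintro ⟨rfl, rfl⟩
    cases i <;> simp

lemma isExpected_of_apply_eq (α : doubleCover X ≃g doubleCover X) (f : V → V) (b : Bool)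
    (hα : ∀ p, α p = (f p.1, xor p.2 b)) : IsExpected X α := by
  have hinj : f.Injective := fun x x' h => by
    have : α (x, false) = α (x', false) := by rw [hα, hα, h]
    exact congrArg Prod.fst (α.injective this)
  have hsurj : f.Surjective := fun y => by
    obtain ⟨p, hp⟩ := α.surjective (y, b)
    exact ⟨p.1, congrArg Prod.fst ((hα p).symm.trans hp)⟩
  have hadj (x x' : V) : X.Adj (f x) (f x') ↔ X.Adj x x' := by
    simpa [hα] using α.map_adj_iff (v := (x, false)) (w := (x', true))
  exact ⟨⟨Equiv.ofBijective f ⟨hinj, hsurj⟩, hadj _ _⟩, b, hα⟩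

lemma IsExpected.apply_true_eq {α : doubleCover X ≃g doubleCover X} (hα : IsExpected X α)
    (x : V) : α (x, true) = ((α (x, false)).1, !(α (x, false)).2) := by
  obtain ⟨φ, b, h⟩ := hα
  simp [h]

section CommutesWithSwap

variable {α : doubleCover X ≃g doubleCover X}
  (hτ : ∀ x, α (x, true) = ((α (x, false)).1, !(α (x, false)).2))
include hτ

lemma snd_apply_false_eq_of_adj {x x' : V} (h : X.Adj x x') :
    (α (x, false)).2 = (α (x', false)).2 := by
  have := (α.map_adj_iff (v := (x, false)) (w := (x', true))).mpr ⟨h, by simp⟩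
  rw [hτ] at this
  simpa using this.2

lemma isExpected_of_preconnected (hX : X.Preconnected) (x₀ : V) : IsExpected X α := by
  refine isExpected_of_apply_eq α (fun x => (α (x, false)).1) (α (x₀, false)).2 ?_
  have hlayer (x : V) : (α (x, false)).2 = (α (x₀, false)).2 :=
    (hX x x₀).apply_eq_of_forall_adj fun _ _ => snd_apply_false_eq_of_adj hτ
  rintro ⟨x, _ | _⟩
  · simp [← hlayer x]
  · simp [hτ, ← hlayer x]

end CommutesWithSwap

end

theorem expected_iff_preserves_fibres_general {V : Type*} (X : SimpleGraph V)
    (hconn : X.Connected)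
    (α : doubleCover X ≃g doubleCover X) :
    IsExpected X α ↔
      ∀ x : V, ∃ y : V,
        ({α (x, false), α (x, true)} : Set (V × Bool)) = {(y, false), (y, true)} := by
  simp only [exists_pair_eq_fibre_iff]
  exact ⟨IsExpected.apply_true_eq,
    fun hτ => isExpected_of_preconnected hτ hconn.preconnected hconn.nonempty.some⟩

theorem expected_iff_preserves_fibres {V : Type*} [Fintype V] (X : SimpleGraph V)
    (hconn : X.Connected) (hnbip : ¬X.Colorable 2)
    (α : doubleCover X ≃g doubleCover X) :
    IsExpected X α ↔
      ∀ x : V, ∃ y : V,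
        ({α (x, false), α (x, true)} : Set (V × Bool)) = {(y, false), (y, true)} :=
  expected_iff_preserves_fibres_general X hconn α
end

section
/- Let X be a graph in which every edge lies on a triangle. Then for every vertex x, the set of vertices of BX at distance 2 from (x,0) equals (X₁(x) ∪ X₂(x)) × {0}, where Xᵢ(x) denotes the set of vertices of X at distance i from x. -/
open SimpleGraph

/-!
In any graph, two vertices are at distance 2 iff they are distinct, non-adjacent and have a
common neighbour. In `BX` a common neighbour `(w, c)` of `(x, b)` and `(y, b')` forces
`b = b' ≠ c`, so non-adjacency is automatic and `(y, b')` is at distance 2 from `(x, b)` iff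
`b' = b` and `x ≠ y` have a common neighbour in `X`. When every edge lies on a triangle, such `y`
are exactly the vertices at distance 1 or 2 from `x`.
-/

lemma SimpleGraph.dist_eq_two_iff {V : Type*} {G : SimpleGraph V} {u v : V} :
    G.dist u v = 2 ↔ u ≠ v ∧ ¬G.Adj u v ∧ (G.commonNeighbors u v).Nonempty := by
  rw [dist, ENat.toNat_eq_iff two_ne_zero]
  exact edist_eq_two_iff

lemma SimpleGraph.ne_and_commonNeighbors_nonempty_iff_dist_eq_one_or_two
    {V : Type*} {G : SimpleGraph V}
    (htri : ∀ u v : V, G.Adj u v → ∃ w : V, G.Adj u w ∧ G.Adj v w) {x y : V} :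
    x ≠ y ∧ (G.commonNeighbors x y).Nonempty ↔ G.dist x y = 1 ∨ G.dist x y = 2 := by
  rw [dist_eq_one_iff_adj, dist_eq_two_iff]
  refine ⟨fun ⟨hne, hcommon⟩ ↦ or_iff_not_imp_left.mpr fun hadj ↦ ⟨hne, hadj, hcommon⟩, ?_⟩
  rintro (hadj | ⟨hne, -, hcommon⟩)
  · obtain ⟨w, hxw, hyw⟩ := htri x y hadj
    exact ⟨hadj.ne, w, hxw, hyw⟩
  · exact ⟨hne, hcommon⟩

section DoubleCover

variable {V : Type*} {X : SimpleGraph V}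

lemma doubleCover_dist_eq_two_iff {x y : V} {b c : Bool} :
    (doubleCover X).dist (x, b) (y, c) = 2 ↔ c = b ∧ x ≠ y ∧ (X.commonNeighbors x y).Nonempty := by
  simp only [dist_eq_two_iff, Set.Nonempty, mem_commonNeighbors, doubleCover_adj, Prod.exists,
    ne_eq, Prod.mk.injEq]
  cases b <;> cases c <;> simp

end DoubleCover

theorem doubleCover_sphere_two_general {V : Type*} (X : SimpleGraph V)
    (htri : ∀ u v : V, X.Adj u v → ∃ w : V, X.Adj u w ∧ X.Adj v w) (x : V) :
    {p : V × Bool | (doubleCover X).dist (x, false) p = 2} =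
      {p : V × Bool | (X.dist x p.1 = 1 ∨ X.dist x p.1 = 2) ∧ p.2 = false} := by
  ext ⟨y, b⟩
  rw [Set.mem_ofPred_eq, Set.mem_ofPred_eq, doubleCover_dist_eq_two_iff,
    ← ne_and_commonNeighbors_nonempty_iff_dist_eq_one_or_two htri]
  exact and_comm

theorem doubleCover_sphere_two {V : Type*} [Fintype V] (X : SimpleGraph V)
    (htri : ∀ u v : V, X.Adj u v → ∃ w : V, X.Adj u w ∧ X.Adj v w) (x : V) :
    {p : V × Bool | (doubleCover X).dist (x, false) p = 2} =
      {p : V × Bool | (X.dist x p.1 = 1 ∨ X.dist x p.1 = 2) ∧ p.2 = false} :=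
  doubleCover_sphere_two_general X htri x
end

section
/- Let X be a graph in which every edge lies on a triangle, and let x be a vertex of X with a vertex at distance 2 from it. Then (x,1) is at distance 3 from (x,0) in BX, and every vertex of BX at distance 3 from (x,0) lies in {(x,1)} ∪ X₂(x)×{1} ∪ X₃(x)×{1}. -/
open SimpleGraph

/-!
Every edge of `BX` changes the sheet, so a walk from `(x,0)` to `p` has even length exactly when
`p` lies on the sheet of `(x,0)`; in particular `d((x,0),(x,1))` is odd and never `1`. A triangle
`x ~ y ~ w ~ x` of `X` lifts to the walk `(x,0),(y,1),(w,0),(x,1)`, giving distance `3`.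
Projecting `BX → X` does not increase distances, and a neighbour of `x` on sheet `1` is at
distance `1`, which leaves `X₀(x) ∪ X₂(x) ∪ X₃(x)` on sheet `1` for the sphere of radius `3`.
-/

namespace SimpleGraph

variable {V W : Type*} {G : SimpleGraph V} {G' : SimpleGraph W} {u v : V}

lemma Reachable.dist_map_le (f : G →g G') (h : G.Reachable u v) :
    G'.dist (f u) (f v) ≤ G.dist u v := by
  obtain ⟨p, hp⟩ := h.exists_walk_length_eq_dist
  simpa [hp] using G'.dist_le (p.map f)

lemma exists_adj_of_dist_ne_zero (h : G.dist u v ≠ 0) : ∃ w, G.Adj u w := by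
  obtain ⟨p, hp⟩ := exists_walk_of_dist_ne_zero h
  have hnil : ¬ p.Nil := fun hnil => h (by rw [← hp, hnil.length_eq_zero])
  exact ⟨p.snd, p.adj_snd hnil⟩

end SimpleGraph

namespace DoubleCover

variable {V : Type*} {X : SimpleGraph V}

@[simp]
lemma adj_iff {p q : V × Bool} : (doubleCover X).Adj p q ↔ X.Adj p.1 q.1 ∧ p.2 ≠ q.2 :=
  Iff.rfl

variable (X) in
def fst : doubleCover X →g X where
  toFun := Prod.fst
  map_rel' h := h.1

lemma snd_eq_iff_even_length {p q : V × Bool} (w : (doubleCover X).Walk p q) :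
    p.2 = q.2 ↔ Even w.length := by
  induction w with
  | nil => simp
  | @cons p r q h w ih =>
    rw [Walk.length_cons, Nat.even_add_one, ← ih]
    have hsheet := h.2
    revert hsheet
    cases p.2 <;> cases r.2 <;> cases q.2 <;> decide

lemma snd_eq_iff_even_dist {p q : V × Bool} (hr : (doubleCover X).Reachable p q) :
    p.2 = q.2 ↔ Even ((doubleCover X).dist p q) := by
  obtain ⟨w, hw⟩ := hr.exists_walk_length_eq_dist
  rw [← hw, snd_eq_iff_even_length]

lemma dist_flip_eq_three {x y w : V} (hxy : X.Adj x y) (hyw : X.Adj y w) (hwx : X.Adj w x)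
    (b : Bool) : (doubleCover X).dist (x, b) (x, !b) = 3 := by
  let lift : (doubleCover X).Walk (x, b) (x, !b) :=
    .cons (v := (y, !b)) (by simpa using hxy) <|
      .cons (v := (w, b)) (by simpa using hyw) <| .cons (by simpa using hwx) .nil
  have hle : (doubleCover X).dist (x, b) (x, !b) ≤ 3 := (doubleCover X).dist_le lift
  have hne : (doubleCover X).dist (x, b) (x, !b) ≠ 1 := fun h =>
    X.loopless.irrefl x (dist_eq_one_iff_adj.mp h).1
  have hodd : ¬ Even ((doubleCover X).dist (x, b) (x, !b)) :=
    (snd_eq_iff_even_dist ⟨lift⟩).not.mp (by simp)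
  rw [Nat.even_iff] at hodd
  omega

lemma snd_eq_and_fst_mem_of_dist_eq_three {x : V} {b : Bool} {p : V × Bool}
    (hp : (doubleCover X).dist (x, b) p = 3) :
    p.2 = !b ∧ (p.1 = x ∨ X.dist x p.1 = 2 ∨ X.dist x p.1 = 3) := by
  have hr : (doubleCover X).Reachable (x, b) p := Reachable.of_dist_ne_zero (by omega)
  have hsnd : p.2 = !b :=
    Bool.eq_not_iff.mpr (Ne.symm ((snd_eq_iff_even_dist hr).not.mpr (by rw [hp]; decide)))
  refine ⟨hsnd, ?_⟩
  have hle : X.dist x p.1 ≤ 3 := hp ▸ hr.dist_map_le (fst X)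
  have hne : X.dist x p.1 ≠ 1 := fun h => by
    have hadj : (doubleCover X).Adj (x, b) p := ⟨dist_eq_one_iff_adj.mp h, by simp [hsnd]⟩
    simp [dist_eq_one_iff_adj.mpr hadj] at hp
  rcases Nat.eq_zero_or_pos (X.dist x p.1) with h0 | hpos
  · exact .inl ((hr.map (fst X)).dist_eq_zero_iff.mp h0).symm
  · omega

end DoubleCover

theorem doubleCover_sphere_three_general {V : Type*} (X : SimpleGraph V)
    (htri : ∀ u v : V, X.Adj u v → ∃ w : V, X.Adj u w ∧ X.Adj v w) (x : V)
    (h2 : ∃ z : V, X.dist x z = 2) :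
    (doubleCover X).dist (x, false) (x, true) = 3 ∧
      ∀ p : V × Bool, (doubleCover X).dist (x, false) p = 3 →
        p = (x, true) ∨ (p.2 = true ∧ (X.dist x p.1 = 2 ∨ X.dist x p.1 = 3)) := by
  obtain ⟨z, hz⟩ := h2
  obtain ⟨y, hxy⟩ := exists_adj_of_dist_ne_zero (by omega : X.dist x z ≠ 0)
  obtain ⟨w, hxw, hyw⟩ := htri x y hxy
  refine ⟨DoubleCover.dist_flip_eq_three hxy hyw hxw.symm false, fun p hp => ?_⟩
  obtain ⟨hsnd, hx | hfar⟩ := DoubleCover.snd_eq_and_fst_mem_of_dist_eq_three hp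
  · exact .inl (Prod.ext hx hsnd)
  · exact .inr ⟨hsnd, hfar⟩

theorem doubleCover_sphere_three {V : Type*} [Fintype V] (X : SimpleGraph V)
    (htri : ∀ u v : V, X.Adj u v → ∃ w : V, X.Adj u w ∧ X.Adj v w) (x : V)
    (h2 : ∃ z : V, X.dist x z = 2) :
    (doubleCover X).dist (x, false) (x, true) = 3 ∧
      ∀ p : V × Bool, (doubleCover X).dist (x, false) p = 3 →
        p = (x, true) ∨ (p.2 = true ∧ (X.dist x p.1 = 2 ∨ X.dist x p.1 = 3)) :=
  doubleCover_sphere_three_general X htri x h2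
end

section
/- Let X be a connected distance-regular graph of diameter d ≥ 4 with intersection array {b₀,…,b_{d-1}, c₁,…,c_d}. If b₀ > b₁ + 1 and b₂ ≥ 1 and b₃ ≥ 1, then X is stable. -/
/-!
Since `b₀ > b₁ + 1`, every edge of `X` lies in a triangle. Hence `BX` is connected, so an automorphism
`α` of `BX` either fixes or swaps the two fibres `V × {i}`: `α (x, false) = (σ x, s)` and
`α (y, true) = (τ y, !s)` with `x ~ y ↔ σ x ~ τ y`. Completing an edge `x ~ y` to a triangle `x y z`
gives the path `τ x ~ σ z ~ τ y`, so every neighbour of `σ x` lies within distance 2 of `τ x`; in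
particular `σ x` and `τ x`, if distinct, are at distance 2 or 3. But then `b₂ ≥ 1` or `b₃ ≥ 1`
provides a neighbour of `σ x` at distance 3 or 4 from `τ x`. So `σ = τ`, and `α` is the lift of the
automorphism `σ` of `X`, composed with the swap when `s = true`.
-/

open SimpleGraph

namespace SimpleGraph

variable {V : Type*} {X : SimpleGraph V}

lemma Preconnected.apply_eq_of_forall_adj {β : Type*} (hX : X.Preconnected) {f : V → β}
    (hf : ∀ x y, X.Adj x y → f x = f y) (x y : V) : f x = f y := by
  obtain ⟨w⟩ := hX x y
  induction w with
  | nil => rfl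
  | cons hadj _ ih => exact (hf _ _ hadj).trans ih

@[simp]
lemma doubleCover_adj {p q : V × Bool} :
    (doubleCover X).Adj p q ↔ X.Adj p.1 q.1 ∧ p.2 ≠ q.2 :=
  Iff.rfl

lemma Reachable.exists_reachable_doubleCover {x y : V} (h : X.Reachable x y) (i : Bool) :
    ∃ j, (doubleCover X).Reachable (x, i) (y, j) := by
  obtain ⟨w⟩ := h
  induction w generalizing i with
  | nil => exact ⟨i, .rfl⟩
  | cons hadj _ ih =>
    obtain ⟨j, hj⟩ := ih (!i)
    exact ⟨j, (show (doubleCover X).Adj (_, i) (_, !i) by simp [hadj]).reachable.trans hj⟩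

lemma doubleCover_reachable_not_of_triangle {x y z : V} (hxy : X.Adj x y) (hyz : X.Adj y z)
    (hzx : X.Adj z x) (i : Bool) : (doubleCover X).Reachable (x, i) (x, !i) :=
  (show (doubleCover X).Adj (x, i) (y, !i) by simp [hxy]).reachable.trans <|
    (show (doubleCover X).Adj (y, !i) (z, i) by simp [hyz]).reachable.trans <|
      (show (doubleCover X).Adj (z, i) (x, !i) by simp [hzx]).reachable

lemma doubleCover_preconnected_of_triangle (hX : X.Preconnected) {x y z : V} (hxy : X.Adj x y)
    (hyz : X.Adj y z) (hzx : X.Adj z x) : (doubleCover X).Preconnected := by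
  rintro ⟨a, i⟩ ⟨b, j⟩
  obtain ⟨i', hi'⟩ := (hX a x).exists_reachable_doubleCover i
  obtain ⟨j', hj'⟩ := (hX b x).exists_reachable_doubleCover j
  have hfibre : (doubleCover X).Reachable (x, i') (x, j') := by
    have hflip := doubleCover_reachable_not_of_triangle hxy hyz hzx
    cases i' <;> cases j'
    exacts [.rfl, hflip false, hflip true, .rfl]
  exact hi'.trans (hfibre.trans hj'.symm)

lemma exists_snd_apply_eq_xor (h : (doubleCover X).Preconnected)
    (α : doubleCover X ≃g doubleCover X) : ∃ s, ∀ p, (α p).2 = xor p.2 s := by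
  rcases isEmpty_or_nonempty V with hV | ⟨⟨x⟩⟩
  · exact ⟨false, fun p => isEmptyElim p.1⟩
  have hconst : ∀ p q, xor (α p).2 p.2 = xor (α q).2 q.2 := by
    refine h.apply_eq_of_forall_adj fun p q hpq => ?_
    have hαpq : (α p).2 ≠ (α q).2 := (α.map_adj_iff.mpr hpq).2
    rw [Bool.eq_not.mpr hpq.2.symm, Bool.eq_not.mpr hαpq.symm, Bool.not_xor_not]
  refine ⟨xor (α (x, false)).2 false, fun p => ?_⟩
  rw [← hconst p, Bool.xor_comm (α p).2, ← Bool.xor_assoc, Bool.xor_self, Bool.false_xor]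

section FibrePreserving

variable {α : doubleCover X ≃g doubleCover X} {s : Bool} (hs : ∀ p, (α p).2 = xor p.2 s)
include hs

lemma adj_iff_adj_fst_apply (x y : V) :
    X.Adj x y ↔ X.Adj (α (x, false)).1 (α (y, true)).1 := by
  simpa [hs] using (α.map_adj_iff (v := (x, false)) (w := (y, true))).symm

lemma surjective_fst_apply_true : Function.Surjective fun y => (α (y, true)).1 := by
  intro w
  obtain ⟨⟨y, i⟩, hy⟩ := α.surjective (w, !s)
  obtain rfl : i = true := by
    have hi := hs (y, i)
    rw [hy] at hi
    cases i <;> simp_all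
  exact ⟨y, congrArg Prod.fst hy⟩

lemma isExpected_of_fst_apply_false_eq (h : ∀ x, (α (x, false)).1 = (α (x, true)).1) :
    IsExpected X α := by
  set σ : V → V := fun x => (α (x, false)).1
  have hfst : ∀ p, (α p).1 = σ p.1 := by
    rintro ⟨x, _ | _⟩
    exacts [rfl, (h x).symm]
  have hinj : σ.Injective := fun x y hxy =>
    congrArg Prod.fst <| α.injective <| Prod.ext hxy (by simp [hs])
  have hsurj : σ.Surjective := fun w =>
    let ⟨p, hp⟩ := α.surjective (w, false)
    ⟨p.1, by rw [← hfst, hp]⟩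
  refine ⟨⟨Equiv.ofBijective σ ⟨hinj, hsurj⟩, fun {x y} => ?_⟩, s, fun p => Prod.ext (hfst p) (hs p)⟩
  change X.Adj (α (x, false)).1 (α (y, false)).1 ↔ X.Adj x y
  rw [h y]
  exact (adj_iff_adj_fst_apply hs x y).symm

end FibrePreserving

lemma commonNeighbors_nonempty_of_ncard_lt {x y : V} (hxy : X.Adj x y)
    (h : (X.neighborSet y ∩ {z | X.dist x z = 2}).ncard + 1 < (X.neighborSet y).ncard) :
    (X.commonNeighbors x y).Nonempty := by
  by_contra hempty
  have hsub : X.neighborSet y ⊆ insert x (X.neighborSet y ∩ {z | X.dist x z = 2}) := by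
    intro z (hyz : X.Adj y z)
    rcases hyz.diff_dist_adj (u := x) with hz | hz | hz <;>
      rw [dist_eq_one_iff_adj.mpr hxy] at hz
    · exact absurd ⟨z, (X.mem_commonNeighbors).mpr ⟨dist_eq_one_iff_adj.mp hz, hyz⟩⟩ hempty
    · exact Or.inr ⟨hyz, hz⟩
    · exact Or.inl ((hxy.reachable.trans hyz.reachable).dist_eq_zero_iff.mp hz).symm
  have hfin : (X.neighborSet y).Finite := Set.finite_of_ncard_pos (by omega)
  have := (Set.ncard_le_ncard hsub ((hfin.inter_of_left _).insert x)).trans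
    (Set.ncard_insert_le _ _)
  omega

section TwistedAdjacency

variable {σ τ : V → V} (hτ : τ.Surjective) (hrel : ∀ x y, X.Adj x y ↔ X.Adj (σ x) (τ y))
  (htri : ∀ x y, X.Adj x y → (X.commonNeighbors x y).Nonempty)
include hτ hrel htri

lemma dist_le_two_of_adj_iff_adj {x w : V} (hw : X.Adj (σ x) w) : X.dist (τ x) w ≤ 2 := by
  obtain ⟨y, rfl⟩ := hτ w
  obtain ⟨z, hz⟩ := htri x y ((hrel x y).mpr hw)
  rw [mem_commonNeighbors] at hz
  have hxz : X.Adj (τ x) (σ z) := ((hrel z x).mp hz.1.symm).symm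
  have hzy : X.Adj (σ z) (τ y) := (hrel z y).mp hz.2.symm
  simpa using dist_le (Walk.cons hxz (Walk.cons hzy .nil))

lemma eq_of_forall_adj_iff_adj (hconn : X.Connected)
    (hfar : ∀ u v, 2 ≤ X.dist v u → X.dist v u ≤ 3 → ∃ w, X.Adj u w ∧ 2 < X.dist v w) :
    σ = τ := by
  funext x
  by_contra hne
  have : Nontrivial V := nontrivial_of_ne _ _ hne
  obtain ⟨y, hxy⟩ := hconn.preconnected.exists_adj_of_nontrivial x
  have hnear := fun w => dist_le_two_of_adj_iff_adj hτ hrel htri (x := x) (w := w)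
  have hy : X.Adj (σ x) (τ y) := (hrel x y).mp hxy
  have h3 : X.dist (τ x) (σ x) ≤ 3 := by
    have := hnear _ hy
    rcases hy.symm.diff_dist_adj (u := τ x) with h | h | h <;> omega
  have h0 : X.dist (τ x) (σ x) ≠ 0 := by
    rw [Ne, hconn.dist_eq_zero_iff]
    exact Ne.symm hne
  have h1 : X.dist (τ x) (σ x) ≠ 1 := by
    rw [Ne, dist_eq_one_iff_adj]
    exact fun h => X.irrefl ((hrel x x).mpr h.symm)
  obtain ⟨w, huw, hvw⟩ := hfar (σ x) (τ x) (by omega) h3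
  exact absurd (hnear w huw) (by omega)

end TwistedAdjacency

end SimpleGraph

theorem stable_of_distance_regular_general {V : Type*} (X : SimpleGraph V)
    (d : ℕ) (b : ℕ → ℕ)
    (hconn : X.Connected) (hd : 4 ≤ d)
    (hb : ∀ j < d, ∀ x y : V, X.dist x y = j →
      (X.neighborSet y ∩ {z | X.dist x z = j + 1}).ncard = b j)
    (hb0 : b 1 + 1 < b 0) (hb2 : 1 ≤ b 2) (hb3 : 1 ≤ b 3) :
    IsStable X := by
  have hdeg : ∀ y, (X.neighborSet y).ncard = b 0 := fun y => by
    rw [← hb 0 (by omega) y y dist_self]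
    congr 1
    ext z
    simp
  have htri : ∀ x y, X.Adj x y → (X.commonNeighbors x y).Nonempty := fun x y hxy =>
    commonNeighbors_nonempty_of_ncard_lt hxy <| by
      change (X.neighborSet y ∩ {z | X.dist x z = 1 + 1}).ncard + 1 < _
      rwa [hdeg, hb 1 (by omega) x y (dist_eq_one_iff_adj.mpr hxy)]
  have hfar : ∀ u v, 2 ≤ X.dist v u → X.dist v u ≤ 3 → ∃ w, X.Adj u w ∧ 2 < X.dist v w := by
    intro u v h2 h3
    have hpos : (X.neighborSet u ∩ {z | X.dist v z = X.dist v u + 1}).ncard ≠ 0 := by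
      rw [hb _ (by omega) v u rfl]
      obtain h | h : X.dist v u = 2 ∨ X.dist v u = 3 := by omega
      all_goals rw [h]; omega
    obtain ⟨w, huw, hvw⟩ := Set.nonempty_of_ncard_ne_zero hpos
    have hvw : X.dist v w = X.dist v u + 1 := hvw
    exact ⟨w, huw, by omega⟩
  intro α
  obtain ⟨x⟩ := hconn.nonempty
  obtain ⟨y, hxy⟩ := Set.nonempty_of_ncard_ne_zero (s := X.neighborSet x) (by rw [hdeg]; omega)
  obtain ⟨z, hxz, hyz⟩ : ∃ z, X.Adj x z ∧ X.Adj y z := htri x y hxy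
  obtain ⟨s, hs⟩ := exists_snd_apply_eq_xor
    (doubleCover_preconnected_of_triangle hconn.preconnected hxy hyz hxz.symm) α
  exact isExpected_of_fst_apply_false_eq hs <| congrFun <|
    eq_of_forall_adj_iff_adj (surjective_fst_apply_true hs) (adj_iff_adj_fst_apply hs) htri hconn hfar

theorem stable_of_distance_regular {V : Type*} [Fintype V] (X : SimpleGraph V)
    [DecidableRel X.Adj] (d : ℕ) (b c : ℕ → ℕ)
    (hreg : ∃ k, X.IsRegularOfDegree k)
    (hconn : X.Connected) (hdiam : X.diam = d) (hd : 4 ≤ d)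
    (hb : ∀ j < d, ∀ x y : V, X.dist x y = j →
      (X.neighborSet y ∩ {z | X.dist x z = j + 1}).ncard = b j)
    (hc : ∀ j, 1 ≤ j → j ≤ d → ∀ x y : V, X.dist x y = j →
      (X.neighborSet y ∩ {z | X.dist x z = j - 1}).ncard = c j)
    (hb0 : b 1 + 1 < b 0) (hb2 : 1 ≤ b 2) (hb3 : 1 ≤ b 3) :
    IsStable X :=
  stable_of_distance_regular_general X d b hconn hd hb hb0 hb2 hb3
end

section
/- Let X be a triangle-free graph of diameter 2 and x a vertex of X. If X is non-bipartite, then there is a vertex z at distance 2 from x that has a neighbour at distance 2 from x; moreover, the vertex (x,1) of BX is at distance exactly 5 from (x,0), and every vertex of BX at distance 5 from (x,0) lies in {(x,1)} ∪ (X₂(x) ∖ S(x)) × {1}, where S(x) is the set of vertices at distance 2 from x having a neighbour at distance 2 from x. -/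
open SimpleGraph

/-- `Sset X x` is the set of vertices at distance 2 from `x` having a neighbour at
distance 2 from `x`. -/
def Sset {V : Type*} (X : SimpleGraph V) (x : V) : Set V :=
  {z | X.dist x z = 2 ∧ ∃ w, X.Adj z w ∧ X.dist x w = 2}

/-! Every vertex lies within distance 2 of `x`, and the neighbourhood of `x` is independent since
`X` is triangle-free. Hence colouring each vertex by whether it is adjacent to `x` is a proper
2-colouring unless some edge joins two vertices of `X₂(x)`; as `X` is not bipartite, there is such
an edge `zw`, and `x – z – w – x` is a closed walk of length 5.

Walks in `BX` from `(x, 0)` to `(y, 1)` are the lifts of the odd walks from `x` to `y` in `X`, so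
their least length is the least odd length of a walk from `x` to `y`. For `y = x` this is 5, since
no closed walk has length 1 (no loops) or 3 (no triangles). It is 1 when `x ~ y`, and at most 3
when `y ∈ S(x)`, which leaves `y = x` or `y ∈ X₂(x) ∖ S(x)` at distance 5. -/

namespace SimpleGraph

variable {V : Type*} {X : SimpleGraph V}

lemma CliqueFree.five_le_length_of_odd (h : X.CliqueFree 3) {u : V} (w : X.Walk u u)
    (hw : Odd w.length) : 5 ≤ w.length := by
  match w, hw with
  | .nil, h0 => simp [Nat.odd_iff] at h0
  | .cons h₁ .nil, _ => exact absurd h₁ (X.loopless.irrefl _)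
  | .cons _ (.cons _ .nil), h2 => simp [Nat.odd_iff] at h2
  | .cons h₁ (.cons h₂ (.cons h₃ .nil)), _ =>
    exact (X.isIndepSet_neighborSet_of_triangleFree h _ h₁ h₃.symm h₂.ne h₂).elim
  | .cons _ (.cons _ (.cons _ (.cons _ .nil))), h4 => simp [Nat.odd_iff] at h4
  | .cons _ (.cons _ (.cons _ (.cons _ (.cons _ _)))), _ => simp

lemma exists_walk_length_five_of_mem_Sset {x z : V} (hz : z ∈ Sset X x) :
    ∃ w : X.Walk x x, w.length = 5 := by
  obtain ⟨hz2, y, hzy, hy2⟩ := hz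
  obtain ⟨wz, hwz⟩ := exists_walk_of_dist_ne_zero (hz2 ▸ two_ne_zero : X.dist x z ≠ 0)
  obtain ⟨wy, hwy⟩ := exists_walk_of_dist_ne_zero (hy2 ▸ two_ne_zero : X.dist x y ≠ 0)
  exact ⟨wz.append (.cons hzy wy.reverse), by simp [hwz, hwy, hz2, hy2]⟩

lemma exists_mem_Sset_of_not_colorable (h : X.CliqueFree 3) (hconn : X.Preconnected) {x : V}
    (hecc : ∀ v, X.dist x v ≤ 2) (hnbip : ¬X.Colorable 2) : ∃ z, z ∈ Sset X x := by
  by_contra! hS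
  have hdist : ∀ {u v}, X.Adj u v → X.dist x u ≠ 1 → X.dist x v ≠ 1 → X.dist x u = 2 := by
    intro u v huv hu hv
    have hux : x ≠ u := by rintro rfl; exact hv (dist_eq_one_iff_adj.2 huv)
    have := (hconn x u).dist_eq_zero_iff.not.2 hux
    have := hecc u
    omega
  have hvalid : ∀ {u v}, X.Adj u v → decide (X.dist x u = 1) ≠ decide (X.dist x v = 1) := by
    intro u v huv hc
    rw [decide_eq_decide] at hc
    by_cases hu : X.dist x u = 1
    · exact X.isIndepSet_neighborSet_of_triangleFree h x (dist_eq_one_iff_adj.1 hu)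
        (dist_eq_one_iff_adj.1 (hc.1 hu)) huv.ne huv
    · have hv := hc.not.1 hu
      exact hS u ⟨hdist huv hu hv, v, huv, hdist huv.symm hv hu⟩
  exact hnbip (by simpa using (Coloring.mk _ hvalid).colorable)

end SimpleGraph

namespace doubleCover

variable {V : Type*} {X : SimpleGraph V}

def fstHom (X : SimpleGraph V) : doubleCover X →g X :=
  ⟨Prod.fst, And.left⟩

def sndColoring (X : SimpleGraph V) : (doubleCover X).Coloring Bool :=
  Coloring.mk Prod.snd And.right

lemma odd_length_iff {p q : V × Bool} (w : (doubleCover X).Walk p q) :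
    Odd w.length ↔ p.2 ≠ q.2 := by
  rw [(sndColoring X).odd_length_iff_not_congr w]
  change (¬p.2 = true ↔ q.2 = true) ↔ _
  cases p.2 <;> cases q.2 <;> simp

lemma exists_walk_fst {p q : V × Bool} (w : (doubleCover X).Walk p q) :
    ∃ c : X.Walk p.1 q.1, c.length = w.length :=
  ⟨w.map (fstHom X), Walk.length_map _ _⟩

lemma exists_lift {u v : V} (w : X.Walk u v) (b c : Bool) (hbc : Odd w.length ↔ b ≠ c) :
    ∃ w' : (doubleCover X).Walk (u, b) (v, c), w'.length = w.length := by
  induction w generalizing b with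
  | nil =>
    obtain rfl : b = c := by simpa using hbc
    exact ⟨.nil, rfl⟩
  | @cons u u' v h w ih =>
    rw [Walk.length_cons, Nat.odd_add_one] at hbc
    obtain ⟨w', hw'⟩ := ih (!b) (by cases b <;> cases c <;> simp_all)
    have hadj : (doubleCover X).Adj (u, b) (u', !b) := ⟨h, by simp⟩
    exact ⟨.cons hadj w', by simp [hw']⟩

lemma dist_le_length {u v : V} (w : X.Walk u v) (hw : Odd w.length) :
    (doubleCover X).dist (u, false) (v, true) ≤ w.length := by
  obtain ⟨w', hw'⟩ := exists_lift w false true (by simpa using hw)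
  exact hw' ▸ dist_le w'

lemma dist_eq_five_of_mem_Sset (h : X.CliqueFree 3) {x z : V} (hz : z ∈ Sset X x) :
    (doubleCover X).dist (x, false) (x, true) = 5 := by
  obtain ⟨c, hc⟩ := exists_walk_length_five_of_mem_Sset hz
  obtain ⟨c', hc'⟩ := exists_lift c false true (by simp [hc]; decide)
  obtain ⟨w, hw⟩ := c'.reachable.exists_walk_length_eq_dist
  obtain ⟨c₀, hc₀⟩ := exists_walk_fst w
  have h5 := h.five_le_length_of_odd c₀ (hc₀ ▸ (odd_length_iff w).2 (by simp))
  have := dist_le c'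
  omega

lemma eq_or_mem_of_dist_eq_five {x : V} (hecc : ∀ v, X.dist x v ≤ 2) {p : V × Bool}
    (hp : (doubleCover X).dist (x, false) p = 5) :
    p = (x, true) ∨ (p.2 = true ∧ X.dist x p.1 = 2 ∧ p.1 ∉ Sset X x) := by
  obtain ⟨y, j⟩ := p
  obtain ⟨w, hw⟩ :=
    exists_walk_of_dist_ne_zero (by omega : (doubleCover X).dist (x, false) (y, j) ≠ 0)
  have hj : false ≠ j := (odd_length_iff w).1 (by rw [hw, hp]; decide)
  obtain rfl : j = true := by simpa [eq_comm] using hj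
  have hreach : X.Reachable x y := (exists_walk_fst w).elim fun c _ => c.reachable
  obtain h | h | h : X.dist x y = 0 ∨ X.dist x y = 1 ∨ X.dist x y = 2 := by
    have := hecc y
    omega
  · left
    rw [hreach.dist_eq_zero_iff.1 h]
  · have := dist_le_length (.cons (dist_eq_one_iff_adj.1 h) .nil) (by simp)
    simp [hp] at this
  · refine .inr ⟨rfl, h, fun ⟨_, u, hyu, hu⟩ => ?_⟩
    obtain ⟨wu, hwu⟩ := exists_walk_of_dist_ne_zero (hu ▸ two_ne_zero : X.dist x u ≠ 0)
    have := dist_le_length (wu.concat hyu.symm) (by simp [hwu, hu]; decide)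
    simp [hwu, hu, hp] at this

end doubleCover

theorem triangle_free_sphere_five_general {V : Type*} (X : SimpleGraph V)
    (htfree : X.CliqueFree 3) (hdiam : X.diam = 2) (hnbip : ¬X.Colorable 2) (x : V) :
    (∃ z, z ∈ Sset X x) ∧
    (doubleCover X).dist (x, false) (x, true) = 5 ∧
    ∀ p : V × Bool, (doubleCover X).dist (x, false) p = 5 →
      p = (x, true) ∨ (p.2 = true ∧ X.dist x p.1 = 2 ∧ p.1 ∉ Sset X x) := by
  have hediam : X.ediam ≠ ⊤ := ediam_ne_top_of_diam_ne_zero (by omega)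
  have hecc : ∀ v, X.dist x v ≤ 2 := fun v => hdiam ▸ dist_le_diam hediam
  obtain ⟨z, hz⟩ :=
    exists_mem_Sset_of_not_colorable htfree (preconnected_of_ediam_ne_top hediam) hecc hnbip
  exact ⟨⟨z, hz⟩, doubleCover.dist_eq_five_of_mem_Sset htfree hz,
    fun _ => doubleCover.eq_or_mem_of_dist_eq_five hecc⟩

theorem triangle_free_sphere_five {V : Type*} [Fintype V] (X : SimpleGraph V)
    (htfree : X.CliqueFree 3) (hdiam : X.diam = 2) (hnbip : ¬X.Colorable 2) (x : V) :
    (∃ z, z ∈ Sset X x) ∧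
    (doubleCover X).dist (x, false) (x, true) = 5 ∧
    ∀ p : V × Bool, (doubleCover X).dist (x, false) p = 5 →
      p = (x, true) ∨ (p.2 = true ∧ X.dist x p.1 = 2 ∧ p.1 ∉ Sset X x) :=
  triangle_free_sphere_five_general X htfree hdiam hnbip x
end

section
/- Let X be a strongly regular graph with parameters (n,k,λ,μ) such that k > μ and λ = 0. Then X is stable. -/
/-! Since `X` is connected and contains a pentagon, the double cover `BX` is connected, so an
automorphism of `BX` either preserves or swaps the two levels; up to the swap it is a two-fold
automorphism `(φ, ψ)` of `X`, i.e. `x ~ y ↔ φ x ~ ψ y`. Such a pair transports common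
neighbourhoods: `N(φ x) ∩ N(φ y) = ψ (N(x) ∩ N(y))`. In a triangle-free strongly regular graph
with `μ > 0`, distinct vertices are adjacent exactly when they have no common neighbour, so `φ`
is an automorphism of `X`. Then `φ y` and `ψ y` have the same neighbourhood, and `μ < k` makes
`X` twin-free, so `φ = ψ`. -/

open SimpleGraph

namespace SimpleGraph

variable {V : Type*} {X : SimpleGraph V}

section StronglyRegular

variable [Fintype V] [DecidableRel X.Adj] {n k ℓ m : ℕ}

theorem IsSRGWith.exists_adj_not_adj (hsrg : X.IsSRGWith n k ℓ m) (hk : m < k) {u v : V}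
    (hne : u ≠ v) (hnadj : ¬X.Adj u v) : ∃ w, X.Adj u w ∧ ¬X.Adj v w := by
  by_contra! hsub
  have hcn : X.commonNeighbors u v = X.neighborSet u :=
    Set.inter_eq_self_of_subset_left fun w hw => hsub w hw
  have hcard := hsrg.of_not_adj hne hnadj
  rw [Fintype.card_congr (Equiv.setCongr hcn), card_neighborSet_eq_degree,
    hsrg.regular u] at hcard
  omega

theorem IsSRGWith.twinFree (hsrg : X.IsSRGWith n k ℓ m) (hk : m < k) : TwinFree X := by
  intro u v huv
  by_contra hne
  by_cases hadj : X.Adj u v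
  · exact X.irrefl (show v ∈ X.neighborSet v from huv ▸ hadj)
  · obtain ⟨w, huw, hvw⟩ := hsrg.exists_adj_not_adj hk hne hadj
    exact hvw (show w ∈ X.neighborSet v from huv ▸ huw)

theorem IsSRGWith.commonNeighbors_nonempty (hsrg : X.IsSRGWith n k ℓ m) (hm : 0 < m)
    {u v : V} (hne : u ≠ v) (hnadj : ¬X.Adj u v) : (X.commonNeighbors u v).Nonempty := by
  rw [← Set.nonempty_coe_sort, ← Fintype.card_pos_iff, hsrg.of_not_adj hne hnadj]
  exact hm

/-- The pentagon `u c v t w u`: `c` is a common neighbour of `u` and `v`, `w` a neighbour of `u`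
outside the neighbourhood of `v`, and `t` a common neighbour of `w` and `v`. -/
theorem IsSRGWith.exists_walk_length_five (hsrg : X.IsSRGWith n k ℓ m) (hm : 0 < m) (hk : m < k)
    {u v : V} (hne : u ≠ v) (hnadj : ¬X.Adj u v) : ∃ p : X.Walk u u, p.length = 5 := by
  obtain ⟨c, huc, hvc⟩ := hsrg.commonNeighbors_nonempty hm hne hnadj
  obtain ⟨w, huw, hvw⟩ := hsrg.exists_adj_not_adj hk hne hnadj
  have hwv : w ≠ v := by rintro rfl; exact hnadj huw
  obtain ⟨t, hwt, hvt⟩ :=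
    hsrg.commonNeighbors_nonempty hm hwv fun h => hvw h.symm
  exact ⟨.cons huc <| .cons hvc.symm <| .cons hvt <| .cons hwt.symm <| .cons huw.symm .nil, rfl⟩

theorem IsSRGWith.adj_iff_commonNeighbors_eq_empty (hsrg : X.IsSRGWith n k 0 m) (hm : 0 < m)
    {u v : V} : X.Adj u v ↔ u ≠ v ∧ X.commonNeighbors u v = ∅ := by
  refine ⟨fun hadj => ⟨hadj.ne, ?_⟩, fun ⟨hne, hempty⟩ => ?_⟩
  · rw [← Set.not_nonempty_iff_eq_empty, ← Set.nonempty_coe_sort, ← Fintype.card_pos_iff,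
      hsrg.of_adj u v hadj]
    exact lt_irrefl 0
  · by_contra hnadj
    exact (hsrg.commonNeighbors_nonempty hm hne hnadj).ne_empty hempty

end StronglyRegular

section TwoFold

/-- `(φ, ψ)` is a two-fold automorphism (TF-automorphism) of `X`; the pairs with `φ = ψ` are
the automorphisms of `X`. -/
def IsTwoFoldAut (X : SimpleGraph V) (φ ψ : Equiv.Perm V) : Prop :=
  ∀ x y, X.Adj x y ↔ X.Adj (φ x) (ψ y)

variable {φ ψ : Equiv.Perm V}

theorem IsTwoFoldAut.commonNeighbors_eq_image (h : X.IsTwoFoldAut φ ψ) (x y : V) :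
    X.commonNeighbors (φ x) (φ y) = ψ '' X.commonNeighbors x y := by
  ext z
  rw [Equiv.image_eq_preimage_symm, Set.mem_preimage]
  simp only [mem_commonNeighbors, h _ (ψ.symm z), Equiv.apply_symm_apply]

theorem IsTwoFoldAut.neighborSet_eq (h : X.IsTwoFoldAut φ ψ)
    (hφ : ∀ x y, X.Adj x y ↔ X.Adj (φ x) (φ y)) (y : V) :
    X.neighborSet (φ y) = X.neighborSet (ψ y) := by
  ext z
  obtain ⟨x, rfl⟩ := φ.surjective z
  rw [mem_neighborSet, mem_neighborSet, adj_comm, ← hφ, h, adj_comm]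

theorem IsTwoFoldAut.eq_of_isSRGWith [Fintype V] [DecidableRel X.Adj] {n k m : ℕ}
    (h : X.IsTwoFoldAut φ ψ) (hsrg : X.IsSRGWith n k 0 m) (hm : 0 < m) (hk : m < k) :
    φ = ψ := by
  have hφ : ∀ x y, X.Adj x y ↔ X.Adj (φ x) (φ y) := fun x y => by
    rw [hsrg.adj_iff_commonNeighbors_eq_empty hm, hsrg.adj_iff_commonNeighbors_eq_empty hm,
      h.commonNeighbors_eq_image, Set.image_eq_empty, φ.injective.ne_iff]
  exact Equiv.ext fun y => hsrg.twinFree hk _ _ (h.neighborSet_eq hφ y)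

end TwoFold

section DoubleCover

theorem Walk.reachable_doubleCover {x y : V} (p : X.Walk x y) (i : Bool) :
    (doubleCover X).Reachable (x, i) (y, xor (decide (Odd p.length)) i) := by
  induction p generalizing i with
  | nil => simp
  | cons hadj p ih =>
    have hstep : (doubleCover X).Adj (_, i) (_, !i) := ⟨hadj, by simp⟩
    convert hstep.reachable.trans (ih !i) using 2
    simp only [Walk.length_cons, Nat.odd_add_one, decide_not]
    cases decide (Odd p.length) <;> cases i <;> rfl

theorem doubleCover_preconnected (hconn : X.Connected) {u : V} (c : X.Walk u u)
    (hc : Odd c.length) : (doubleCover X).Preconnected := by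
  have hflip : ∀ x i, (doubleCover X).Reachable (x, i) (x, !i) := fun x i => by
    obtain ⟨p⟩ := hconn x u
    have hodd : Odd (p.length + (c.length + p.length)) := by
      rw [add_left_comm, ← two_mul]
      exact hc.add_even (even_two_mul _)
    simpa [hodd] using (p.append (c.append p.reverse)).reachable_doubleCover i
  rintro ⟨x, i⟩ ⟨y, j⟩
  obtain ⟨p⟩ := hconn x y
  have hreach := p.reachable_doubleCover i
  by_cases hj : xor (decide (Odd p.length)) i = j
  · exact hj ▸ hreach
  · exact Bool.eq_not_iff.mpr (Ne.symm hj) ▸ hreach.trans (hflip _ _)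

theorem exists_snd_doubleCover_iso_eq_xor [Nonempty V] (hpre : (doubleCover X).Preconnected)
    (α : doubleCover X ≃g doubleCover X) : ∃ b, ∀ p, (α p).2 = xor p.2 b := by
  have hadj : ∀ p q, (doubleCover X).Adj p q → xor p.2 (α p).2 = xor q.2 (α q).2 := by
    intro p q hpq
    have hxor : ∀ a b c d : Bool, a ≠ b → c ≠ d → xor a c = xor b d := by decide
    exact hxor _ _ _ _ hpq.2 (α.map_adj_iff.mpr hpq).2
  have hconst : ∀ p q, xor p.2 (α p).2 = xor q.2 (α q).2 := fun p q => by
    obtain ⟨w⟩ := hpre p q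
    induction w with
    | nil => rfl
    | cons hpq _ ih => exact (hadj _ _ hpq).trans ih
  obtain ⟨p₀⟩ : Nonempty (V × Bool) := inferInstance
  refine ⟨xor p₀.2 (α p₀).2, fun p => ?_⟩
  rw [← hconst p p₀, ← Bool.xor_assoc, Bool.xor_self, Bool.false_xor]

theorem exists_isTwoFoldAut_of_snd_eq_xor [Finite V] (α : doubleCover X ≃g doubleCover X)
    {b : Bool} (hb : ∀ p, (α p).2 = xor p.2 b) :
    ∃ σ : Bool → Equiv.Perm V,
      X.IsTwoFoldAut (σ false) (σ true) ∧ ∀ p, α p = (σ p.2 p.1, xor p.2 b) := by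
  have hα : ∀ p, α p = ((α p).1, xor p.2 b) := fun p => Prod.ext rfl (hb p)
  have hinj : ∀ i, Function.Injective fun x => (α (x, i)).1 := fun i x x' h =>
    congrArg Prod.fst (α.injective (Prod.ext h (by rw [hb, hb])))
  refine ⟨fun i => Equiv.ofBijective _ (hinj i).bijective_of_finite, fun x y => ?_, hα⟩
  have hadj := α.map_adj_iff (v := (x, false)) (w := (y, true))
  rw [hα (x, false), hα (y, true)] at hadj
  simpa [doubleCover] using hadj.symm

theorem isStable_of_forall_isTwoFoldAut [Finite V] [Nonempty V]
    (hpre : (doubleCover X).Preconnected) (htf : ∀ φ ψ, X.IsTwoFoldAut φ ψ → φ = ψ) :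
    IsStable X := by
  intro α
  obtain ⟨b, hb⟩ := exists_snd_doubleCover_iso_eq_xor hpre α
  obtain ⟨σ, hσ, hα⟩ := exists_isTwoFoldAut_of_snd_eq_xor α hb
  have hσ_const : ∀ i, σ i = σ false := by
    rintro (_ | _)
    · rfl
    · exact (htf _ _ hσ).symm
  refine ⟨⟨σ false, fun {x y} => ?_⟩, b, fun p => (hα p).trans (by rw [hσ_const]; rfl)⟩
  rw [hσ x y, hσ_const true]

end DoubleCover

end SimpleGraph

theorem stable_srg_lambda_zero {V : Type*} [Fintype V] (X : SimpleGraph V)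
    [DecidableRel X.Adj] (n k m : ℕ)
    (hsrg : X.IsSRGWith n k 0 m) (hconn : X.Connected) (hdiam : X.diam = 2)
    (hk : m < k) :
    IsStable X := by
  have := hconn.nonempty
  obtain ⟨u, v, huv⟩ := X.exists_dist_eq_diam
  have hedist : X.edist u v = 2 := by
    rw [← (hconn u v).coe_dist_eq_edist, huv, hdiam]
    rfl
  obtain ⟨hne, hnadj, hcommon⟩ := edist_eq_two_iff.mp hedist
  have hm : 0 < m := by
    rw [← hsrg.of_not_adj hne hnadj]
    exact Fintype.card_pos_iff.mpr hcommon.to_subtype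
  obtain ⟨c, hc⟩ := hsrg.exists_walk_length_five hm hk hne hnadj
  refine isStable_of_forall_isTwoFoldAut (doubleCover_preconnected hconn c ?_) ?_
  · rw [hc]
    decide
  · exact fun φ ψ h => h.eq_of_isSRGWith hsrg hm hk
end
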